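/- arXiv:2304.04641 — 2 statements merged into one kernel-verified Lean document; each statement's English description precedes it below -/
import Mathlib

section
/- Under the two-sided Lipschitz assumption and the optimization-regret assumption, if Δ_up ≥ 2·c_2·c_b/(c_a·√T), then the time-and-batch averaged recovery error satisfies (1/n)∑_{i=1}^n (1/T)∑_{t=1}^T ‖X_{t,i} − X_i‖ ≥ (c_a/2)·Δ_up. -/
/-! The lower Lipschitz bound and the triangle inequality through the distorted point `X̃ᵢ` give,
for every round `t` and sample `i`,
`‖X_{t,i} - Xᵢ‖ ≥ c_a (‖∇(X̃ᵢ) - ∇(Xᵢ)‖ - ‖∇(X_{t,i}) - ∇(X̃ᵢ)‖)`.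
Averaging, the first term is at least `Δ_up` and the second is the regret, at most `c₂ / √T`.
Comparing the two Lipschitz bounds at a pair with distinct gradients gives `c_a ≤ c_b`,
so the hypothesis on `Δ_up` makes the regret at most `Δ_up / 2`. -/

open Finset

lemma norm_smul_sum_le_mul_sum_norm {ι E : Type*} [Fintype ι] [SeminormedAddCommGroup E]
    [NormedSpace ℝ E] {c : ℝ} (hc : 0 ≤ c) (v : ι → E) :
    ‖c • ∑ i, v i‖ ≤ c * ∑ i, ‖v i‖ := by
  rw [norm_smul, Real.norm_of_nonneg hc]
  exact mul_le_mul_of_nonneg_left (norm_sum_le _ _) hc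

lemma mul_sub_le_norm_sub_of_forall_mul_norm_sub_le {E F : Type*} [SeminormedAddCommGroup E]
    [SeminormedAddCommGroup F] {f : E → F} {c : ℝ} (hc : 0 ≤ c)
    (hf : ∀ x y, c * ‖f x - f y‖ ≤ ‖x - y‖) (x y z : E) :
    c * (‖f z - f y‖ - ‖f x - f z‖) ≤ ‖x - y‖ := by
  have htri : ‖f z - f y‖ ≤ ‖f x - f z‖ + ‖f x - f y‖ := by
    simpa [norm_sub_rev (f z) (f x)] using norm_sub_le_norm_sub_add_norm_sub (f z) (f x) (f y)
  calc c * (‖f z - f y‖ - ‖f x - f z‖) ≤ c * ‖f x - f y‖ := by gcongr; linarith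
    _ ≤ ‖x - y‖ := hf x y

lemma mul_sub_average_le_average {m n : ℕ} (hn : 0 < n) {c : ℝ} {a : Fin m → ℝ}
    {b d : Fin n → Fin m → ℝ} (h : ∀ t i, c * (a i - b t i) ≤ d t i) :
    c * ((1 / m) * ∑ i, a i - (1 / n) * ∑ t, (1 / m) * ∑ i, b t i)
      ≤ (1 / m) * ∑ i, (1 / n) * ∑ t, d t i := by
  calc c * ((1 / m) * ∑ i, a i - (1 / n) * ∑ t, (1 / m) * ∑ i, b t i)
      = (1 / m) * ∑ i, (1 / n) * ∑ t, c * (a i - b t i) := by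
        simp only [mul_sum, mul_sub, sum_sub_distrib, sum_const, card_univ, Fintype.card_fin,
          nsmul_eq_mul]
        rw [sum_comm (f := fun t i => c * (1 / n * (1 / m * b t i)))]
        congr 1
        · exact sum_congr rfl fun i _ => by field_simp
        · exact sum_congr rfl fun i _ => sum_congr rfl fun t _ => by ring
    _ ≤ (1 / m) * ∑ i, (1 / n) * ∑ t, d t i := by gcongr with i _ t; exact h t i

theorem stmt5_general {E F : Type*} [NormedAddCommGroup E]
    [NormedAddCommGroup F] [NormedSpace ℝ F]
    (n T : ℕ) (hT : 0 < T)
    (Xrec : Fin T → Fin n → E) (Xtrue Xtil : Fin n → E)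
    (G : Fin n → E → F)
    (ca cb c2 Δup : ℝ) (hca : 0 < ca) (hc2 : 0 ≤ c2)
    (hLipLow : ∀ i x x', ca * ‖G i x - G i x'‖ ≤ ‖x - x'‖)
    (hLipUp : ∀ i x x', ‖x - x'‖ ≤ cb * ‖G i x - G i x'‖)
    (hreg : (1/(T:ℝ)) * ∑ t, (1/(n:ℝ)) * ∑ i, ‖G i (Xrec t i) - G i (Xtil i)‖
              ≤ c2 / Real.sqrt T)
    (hΔ : Δup = ‖(1/(n:ℝ)) • ∑ i, (G i (Xtil i) - G i (Xtrue i))‖)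
    (hbig : 2 * c2 * cb / (ca * Real.sqrt T) ≤ Δup) :
    (ca/2) * Δup ≤ (1/(n:ℝ)) * ∑ i, (1/(T:ℝ)) * ∑ t, ‖Xrec t i - Xtrue i‖ := by
  rcases (hΔ ▸ norm_nonneg _ : 0 ≤ Δup).eq_or_lt with hzero | hpos
  · rw [← hzero, mul_zero]
    positivity
  obtain ⟨i, hi⟩ : ∃ i, G i (Xtil i) ≠ G i (Xtrue i) := by
    by_contra! h
    simp [hΔ, h] at hpos
  have hcacb : ca ≤ cb := le_of_mul_le_mul_right ((hLipLow i _ _).trans (hLipUp i _ _))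
    (norm_pos_iff.mpr (sub_ne_zero.mpr hi))
  have hsT : 0 < Real.sqrt T := Real.sqrt_pos.mpr (by exact_mod_cast hT)
  have hregret : c2 / Real.sqrt T ≤ Δup / 2 := by
    rw [div_le_iff₀ (by positivity)] at hbig
    rw [div_le_div_iff₀ hsT two_pos]
    nlinarith [mul_le_mul_of_nonneg_left hcacb hc2]
  have hΔle : Δup ≤ (1/(n:ℝ)) * ∑ i, ‖G i (Xtil i) - G i (Xtrue i)‖ :=
    hΔ ▸ norm_smul_sum_le_mul_sum_norm (by positivity) _
  have havg := mul_sub_average_le_average hT fun t i =>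
    mul_sub_le_norm_sub_of_forall_mul_norm_sub_le hca.le (hLipLow i) (Xrec t i) (Xtrue i) (Xtil i)
  calc (ca/2) * Δup = ca * (Δup - Δup / 2) := by ring
    _ ≤ _ := by gcongr; linarith
    _ ≤ _ := havg

/-- Recovery-error lower bound: under the two-sided Lipschitz assumption and the
optimization-regret assumption, if `Δ_up ≥ 2 c₂ c_b / (c_a √T)` then the time-and-batch
averaged recovery error is at least `(c_a / 2) * Δ_up`. -/
theorem stmt5 {E F : Type*} [NormedAddCommGroup E] [NormedSpace ℝ E]
    [NormedAddCommGroup F] [NormedSpace ℝ F]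
    (n T : ℕ) (hn : 0 < n) (hT : 0 < T)
    (Xrec : Fin T → Fin n → E) (Xtrue Xtil : Fin n → E)
    (G : Fin n → E → F)
    (ca cb c2 Δup : ℝ) (hca : 0 < ca) (hcb : 0 < cb) (hc2 : 0 ≤ c2)
    (hLipLow : ∀ i x x', ca * ‖G i x - G i x'‖ ≤ ‖x - x'‖)
    (hLipUp : ∀ i x x', ‖x - x'‖ ≤ cb * ‖G i x - G i x'‖)
    (hreg : (1/(T:ℝ)) * ∑ t, (1/(n:ℝ)) * ∑ i, ‖G i (Xrec t i) - G i (Xtil i)‖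
              ≤ c2 / Real.sqrt T)
    (hΔ : Δup = ‖(1/(n:ℝ)) • ∑ i, (G i (Xtil i) - G i (Xtrue i))‖)
    (hbig : 2 * c2 * cb / (ca * Real.sqrt T) ≤ Δup) :
    (ca/2) * Δup ≤ (1/(n:ℝ)) * ∑ i, (1/(T:ℝ)) * ∑ t, ‖Xrec t i - Xtrue i‖ :=
  stmt5_general n T hT Xrec Xtrue Xtil G ca cb c2 Δup hca hc2 hLipLow hLipUp hreg hΔ hbig
end

section
/- Let D_prot = {Z_1,...,Z_n} be n i.i.d. samples from distribution P over a domain partitioned into N cells of λ-cover, and suppose the loss L is C-Lipschitz in both the parameter and data arguments with |L(θ+δ, Z)| ≤ M for all Z. Then with probability at least 1 − η, the utility loss satisfies |E_{Z∼P}[L(θ+δ, Z)] − (1/n)∑_{i=1}^n L(θ, Z_i)| ≤ C·λ + C·‖δ‖ + M·√((2N·ln 2 + 2·ln(1/η))/n). -/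
open MeasureTheory ProbabilityTheory Real

/-! Hoeffding's inequality for the centred bounded losses `L (θ + δθ) (Z i)` puts their empirical
mean within `M √(2 log (2 / η) / n)` of `E_P[L (θ + δθ)]` with probability at least `1 - η`, and
for `N ≥ 1` this radius is at most `M √((2 N log 2 + 2 log (1 / η)) / n)`. Moving the empirical
mean from `θ + δθ` to `θ` costs at most `C ‖δθ‖` by Lipschitz continuity in the parameter. -/

lemma MeasureTheory.ofReal_one_sub_le_of_measureReal_compl_le {Ω : Type*} [MeasurableSpace Ω]
    {μ : Measure Ω} [IsProbabilityMeasure μ] {s : Set Ω} {η : ℝ} (h : μ.real sᶜ ≤ η) :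
    ENNReal.ofReal (1 - η) ≤ μ s := by
  have hcover : 1 ≤ μ s + μ sᶜ := by
    simpa using measure_union_le (μ := μ) s sᶜ
  calc ENNReal.ofReal (1 - η) ≤ ENNReal.ofReal (1 - μ.real sᶜ) :=
        ENNReal.ofReal_le_ofReal (by linarith)
    _ = 1 - μ sᶜ := by
        rw [ENNReal.ofReal_sub _ measureReal_nonneg, ENNReal.ofReal_one, ofReal_measureReal]
    _ ≤ μ s := tsub_le_iff_right.mpr hcover

namespace ProbabilityTheory

namespace HasSubgaussianMGF

variable {Ω : Type*} {mΩ : MeasurableSpace Ω} {μ : Measure Ω} {X : Ω → ℝ} {c : NNReal}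

lemma measureReal_abs_ge_le (h : HasSubgaussianMGF X c μ) {ε : ℝ} (hε : 0 ≤ ε) :
    μ.real {ω | ε ≤ |X ω|} ≤ 2 * exp (-ε ^ 2 / (2 * c)) := by
  have hsplit : {ω | ε ≤ |X ω|} = {ω | ε ≤ X ω} ∪ {ω | ε ≤ (-X) ω} := by
    ext ω
    simp only [Set.mem_ofPred_eq, Set.mem_union, Pi.neg_apply, le_abs', le_neg (a := ε), or_comm]
  rw [hsplit, two_mul]
  exact (measureReal_union_le _ _).trans
    (add_le_add (h.measure_ge_le hε) (h.neg.measure_ge_le hε))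

lemma measureReal_abs_gt_sqrt_le [IsProbabilityMeasure μ] (h : HasSubgaussianMGF X c μ)
    {η : ℝ} (hη : 0 < η) :
    μ.real {ω | √(2 * c * log (2 / η)) < |X ω|} ≤ η := by
  rcases le_or_gt 1 η with hη1 | hη1
  · exact measureReal_le_one.trans hη1
  -- At `c = 0` the Chernoff exponent `-ε ^ 2 / (2 * c)` is the junk value `0`; use `X = 0` a.e.
  rcases eq_zero_or_pos c with rfl | hc
  · have hnull : μ {ω | X ω ≠ 0} = 0 := ae_iff.mp h.ae_eq_zero_of_hasSubgaussianMGF_zero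
    refine (measureReal_mono_null (s₂ := {ω | X ω ≠ 0}) ?_ ?_).trans_le hη.le
    · intro ω hω hX0
      simp only [Set.mem_ofPred_eq, hX0, abs_zero] at hω
      exact (sqrt_nonneg _).not_gt hω
    · simp [Measure.real, hnull]
  have hlog : 0 < log (2 / η) := log_pos (by rw [lt_div_iff₀ hη]; linarith)
  calc μ.real {ω | √(2 * c * log (2 / η)) < |X ω|}
      ≤ μ.real {ω | √(2 * c * log (2 / η)) ≤ |X ω|} :=
        measureReal_mono (Set.ofPred_subset_ofPred.mpr fun _ ↦ le_of_lt)
    _ ≤ 2 * exp (-√(2 * c * log (2 / η)) ^ 2 / (2 * c)) :=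
        h.measureReal_abs_ge_le (sqrt_nonneg _)
    _ = η := by
        rw [sq_sqrt (by positivity), neg_div, mul_div_cancel_left₀ _ (by positivity),
          exp_neg, exp_log (by positivity)]
        field_simp

end HasSubgaussianMGF

lemma hasSubgaussianMGF_sum_sub_integral {E Ω ι : Type*} [MeasurableSpace E] [MeasurableSpace Ω]
    [Fintype ι] {P : Measure E} [IsProbabilityMeasure P] {μ : Measure Ω} {f : E → ℝ} {M : ℝ}
    (hf : AEMeasurable f P) (hfM : ∀ᵐ z ∂P, |f z| ≤ M) {Z : ι → Ω → E}
    (hZmeas : ∀ i, AEMeasurable (Z i) μ) (hZlaw : ∀ i, μ.map (Z i) = P)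
    (hZindep : iIndepFun Z μ) :
    HasSubgaussianMGF (fun ω ↦ ∑ i, (f (Z i ω) - ∫ z, f z ∂P))
      (Fintype.card ι * ‖M‖₊ ^ 2) μ := by
  have hoeffding : HasSubgaussianMGF (fun z ↦ f z - ∫ z, f z ∂P) (‖M‖₊ ^ 2) P := by
    have h := hasSubgaussianMGF_of_mem_Icc hf (hfM.mono fun _ ↦ abs_le.mp)
    rwa [sub_neg_eq_add, ← two_mul, nnnorm_mul, Real.nnnorm_two,
      mul_div_cancel_left₀ _ two_ne_zero] at h
  have hindep : iIndepFun (fun i ω ↦ f (Z i ω) - ∫ z, f z ∂P) μ :=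
    hZindep.comp₀ (fun _ z ↦ f z - ∫ z, f z ∂P) hZmeas
      fun i ↦ (hZlaw i).symm ▸ hf.sub_const _
  have hsum := HasSubgaussianMGF.sum_of_iIndepFun hindep (c := fun _ ↦ ‖M‖₊ ^ 2)
    (s := Finset.univ) fun i _ ↦ HasSubgaussianMGF.of_map (X := fun z ↦ f z - ∫ z, f z ∂P)
      (hZmeas i) (by rwa [hZlaw i])
  rwa [Finset.sum_const, Finset.card_univ, nsmul_eq_mul] at hsum

lemma ofReal_one_sub_le_measure_abs_integral_sub_mean_le {E Ω : Type*} [MeasurableSpace E]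
    [MeasurableSpace Ω] {P : Measure E} [IsProbabilityMeasure P] {μ : Measure Ω}
    [IsProbabilityMeasure μ] {f : E → ℝ} {M : ℝ} (hM : 0 ≤ M) (hf : AEMeasurable f P)
    (hfM : ∀ᵐ z ∂P, |f z| ≤ M) {n : ℕ} (hn : 0 < n) {Z : Fin n → Ω → E}
    (hZmeas : ∀ i, AEMeasurable (Z i) μ) (hZlaw : ∀ i, μ.map (Z i) = P)
    (hZindep : iIndepFun Z μ) {η : ℝ} (hη : 0 < η) :
    ENNReal.ofReal (1 - η) ≤
      μ {ω | |∫ z, f z ∂P - (1 / n) * ∑ i, f (Z i ω)| ≤ M * √(2 * log (2 / η) / n)} := by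
  have hX := hasSubgaussianMGF_sum_sub_integral hf hfM hZmeas hZlaw hZindep
  have hn' : (0 : ℝ) < n := Nat.cast_pos.mpr hn
  have hdev : ∀ ω, |∫ z, f z ∂P - (1 / n) * ∑ i, f (Z i ω)| =
      |∑ i, (f (Z i ω) - ∫ z, f z ∂P)| / n := by
    intro ω
    rw [← abs_neg, ← abs_of_pos hn', ← abs_div, abs_of_pos hn', Finset.sum_sub_distrib,
      Finset.sum_const, Finset.card_univ, Fintype.card_fin, nsmul_eq_mul]
    congr 1
    field_simp
    ring
  have hradius : M * √(2 * log (2 / η) / n) =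
      √(2 * ((Fintype.card (Fin n) * ‖M‖₊ ^ 2 : NNReal) : ℝ) * log (2 / η)) / n := by
    have : 2 * ((Fintype.card (Fin n) * ‖M‖₊ ^ 2 : NNReal) : ℝ) * log (2 / η) =
        (n * M) ^ 2 * (2 * log (2 / η) / n) := by
      push_cast [Fintype.card_fin]
      rw [Real.norm_eq_abs, sq_abs]
      field_simp
    rw [this, sqrt_mul (by positivity), sqrt_sq (by positivity)]
    field_simp
  apply ofReal_one_sub_le_of_measureReal_compl_le
  refine le_trans (measureReal_mono fun ω hω ↦ ?_) (hX.measureReal_abs_gt_sqrt_le hη)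
  simp only [Set.mem_compl_iff, Set.mem_ofPred_eq, not_le, hdev, hradius] at hω ⊢
  exact (div_lt_div_iff_of_pos_right hn').mp hω

end ProbabilityTheory

lemma abs_mean_sub_mean_le {n : ℕ} (hn : 0 < n) {a b : Fin n → ℝ} {K : ℝ}
    (h : ∀ i, |a i - b i| ≤ K) :
    |(1 / n) * ∑ i, a i - (1 / n) * ∑ i, b i| ≤ K := by
  calc |(1 / n) * ∑ i, a i - (1 / n) * ∑ i, b i| = (1 / n) * |∑ i, (a i - b i)| := by
        rw [← mul_sub, ← Finset.sum_sub_distrib, abs_mul, abs_of_pos (by positivity)]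
    _ ≤ (1 / n) * ∑ _i : Fin n, K := by
        gcongr
        exact (Finset.abs_sum_le_sum_abs _ _).trans (Finset.sum_le_sum fun i _ ↦ h i)
    _ = K := by simp [field]

theorem stmt17_general {Θ E Ω : Type*} [NormedAddCommGroup Θ] [MeasurableSpace E]
    [MeasurableSpace Ω]
    (P : Measure E) [IsProbabilityMeasure P]
    (μ : Measure Ω) [IsProbabilityMeasure μ]
    (L : Θ → E → ℝ) (C M lam η : ℝ)
    (hC : 0 ≤ C) (hM : 0 ≤ M) (hη : 0 < η)
    (θ δθ : Θ) (hlam : ‖δθ‖ < lam)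
    (hLipθ : ∀ θ1 θ2 z, |L θ1 z - L θ2 z| ≤ C * ‖θ1 - θ2‖)
    (hbound : ∀ z, |L (θ + δθ) z| ≤ M)
    (N : ℕ) (hN : 0 < N)
    (hInt : Integrable (L (θ + δθ)) P)
    (n : ℕ) (hn : 0 < n) (Z : Fin n → Ω → E)
    (hZmeas : ∀ i, Measurable (Z i))
    (hZlaw : ∀ i, μ.map (Z i) = P)
    (hZindep : iIndepFun Z μ) :
    ENNReal.ofReal (1 - η) ≤
      μ {ω | |(∫ z, L (θ + δθ) z ∂P) - (1/(n:ℝ)) * ∑ i, L θ (Z i ω)|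
        ≤ C * lam + C * ‖δθ‖
          + M * Real.sqrt ((2*N*Real.log 2 + 2*Real.log (1/η))/n)} := by
  have hClam : 0 ≤ C * lam := mul_nonneg hC ((norm_nonneg δθ).trans hlam.le)
  have hradius :
      M * √(2 * log (2 / η) / n) ≤ M * √((2 * N * log 2 + 2 * log (1 / η)) / n) := by
    have hN1 : (1 : ℝ) ≤ N := Nat.one_le_cast.mpr hN
    rw [div_eq_mul_one_div 2 η, log_mul two_ne_zero (by positivity)]
    gcongr
    nlinarith [log_pos one_lt_two]
  refine (ofReal_one_sub_le_measure_abs_integral_sub_mean_le hM hInt.aemeasurable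
    (ae_of_all _ hbound) hn (fun i ↦ (hZmeas i).aemeasurable) hZlaw hZindep hη).trans
    (measure_mono fun ω hω ↦ ?_)
  have hshift := abs_mean_sub_mean_le hn (K := C * ‖δθ‖)
    (a := fun i ↦ L (θ + δθ) (Z i ω)) (b := fun i ↦ L θ (Z i ω))
    fun i ↦ by simpa using hLipθ (θ + δθ) θ (Z i ω)
  simp only [Set.mem_ofPred_eq] at hω ⊢
  linarith [abs_sub_le (∫ z, L (θ + δθ) z ∂P) ((1 / n) * ∑ i, L (θ + δθ) (Z i ω))
    ((1 / n) * ∑ i, L θ (Z i ω))]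

/-- Utility loss upper bound: for `n` i.i.d. samples from `P`, a loss `L` that is
`C`-Lipschitz in both arguments and bounded by `M` at the distorted parameter, and a
partition of the domain into `N` cells of a `λ`-cover, with probability at least
`1 - η` the utility loss `|E_{Z∼P}[L(θ+δ, Z)] - (1/n)∑ L(θ, Z_i)|` is at most
`C λ + C ‖δ‖ + M √((2N ln 2 + 2 ln(1/η))/n)`. -/
theorem stmt17 {Θ E Ω : Type*} [NormedAddCommGroup Θ] [MetricSpace E] [MeasurableSpace E]
    [MeasurableSpace Ω]
    (P : Measure E) [IsProbabilityMeasure P]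
    (μ : Measure Ω) [IsProbabilityMeasure μ]
    (L : Θ → E → ℝ) (C M lam η : ℝ)
    (hC : 0 ≤ C) (hM : 0 ≤ M) (hη : 0 < η) (hη1 : η < 1)
    (θ δθ : Θ) (hlam : ‖δθ‖ < lam)
    (hLipθ : ∀ θ1 θ2 z, |L θ1 z - L θ2 z| ≤ C * ‖θ1 - θ2‖)
    (hLipz : ∀ θ' z z', |L θ' z - L θ' z'| ≤ C * dist z z')
    (hbound : ∀ z, |L (θ + δθ) z| ≤ M)
    (N : ℕ) (hN : 0 < N) (Cell : Fin N → Set E)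
    (hCellMeas : ∀ i, MeasurableSet (Cell i))
    (hCellCover : (⋃ i, Cell i) = Set.univ)
    (hCellDisj : Pairwise (Function.onFun Disjoint Cell))
    (hCellDiam : ∀ i, ∀ z ∈ Cell i, ∀ z' ∈ Cell i, dist z z' ≤ lam)
    (hInt : Integrable (L (θ + δθ)) P)
    (n : ℕ) (hn : 0 < n) (Z : Fin n → Ω → E)
    (hZmeas : ∀ i, Measurable (Z i))
    (hZlaw : ∀ i, μ.map (Z i) = P)
    (hZindep : iIndepFun Z μ) :
    ENNReal.ofReal (1 - η) ≤
      μ {ω | |(∫ z, L (θ + δθ) z ∂P) - (1/(n:ℝ)) * ∑ i, L θ (Z i ω)|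
        ≤ C * lam + C * ‖δθ‖
          + M * Real.sqrt ((2*N*Real.log 2 + 2*Real.log (1/η))/n)} :=
  stmt17_general P μ L C M lam η hC hM hη θ δθ hlam hLipθ hbound N hN hInt n hn Z hZmeas hZlaw
    hZindep
end
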